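/- arXiv:math/9201229 — 4 statements merged into one kernel-verified Lean document; each statement's English description precedes it below -/
import Mathlib

section
/- Let X be a Banach space and let X₁, X₂ be closed subspaces of X. Let Q₁ : X → X/X₁ and Q₂ : X → X/X₂ be the quotient maps. Then Q₁(X₂) is closed in X/X₁ if and only if Q₂(X₁) is closed in X/X₂. -/
lemma map_mkQ_closed_iff {𝕜 X : Type*} [RCLike 𝕜] [NormedAddCommGroup X] [NormedSpace 𝕜 X]
    (X₁ X₂ : Submodule 𝕜 X) :
    IsClosed ((X₂.map X₁.mkQ : Submodule 𝕜 (X ⧸ X₁)) : Set (X ⧸ X₁)) ↔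
      IsClosed ((X₂ ⊔ X₁ : Submodule 𝕜 X) : Set X) := by
  rw [← (Submodule.isQuotientMap_mkQ X₁).isClosed_preimage]
  have : (X₁.mkQ : X → X ⧸ X₁) ⁻¹' (X₂.map X₁.mkQ : Set (X ⧸ X₁))
      = ((X₂.map X₁.mkQ).comap X₁.mkQ : Set X) := rfl
  rw [this,
    Submodule.comap_map_eq, Submodule.ker_mkQ]

/-- Let `X` be a Banach space (over `ℝ` or `ℂ`, here over a field `𝕜` satisfying `RCLike 𝕜`)
and let `X₁, X₂` be closed linear subspaces of `X`.  Let `Q₁ : X → X/X₁` and `Q₂ : X → X/X₂`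
be the canonical quotient maps.  Then `Q₁(X₂)` is closed in `X/X₁` if and only if `Q₂(X₁)` is
closed in `X/X₂`. -/
theorem quotient_image_closed_iff
    {𝕜 X : Type*} [RCLike 𝕜] [NormedAddCommGroup X] [NormedSpace 𝕜 X] [CompleteSpace X]
    (X₁ X₂ : Submodule 𝕜 X) (h₁ : IsClosed (X₁ : Set X)) (h₂ : IsClosed (X₂ : Set X)) :
    IsClosed ((X₂.map X₁.mkQ : Submodule 𝕜 (X ⧸ X₁)) : Set (X ⧸ X₁)) ↔
      IsClosed ((X₁.map X₂.mkQ : Submodule 𝕜 (X ⧸ X₂)) : Set (X ⧸ X₂)) := by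
  rw [map_mkQ_closed_iff, map_mkQ_closed_iff, sup_comm]
end

section
/- Let X be a Banach space, X₁, X₂ closed subspaces, and Q₁ : X → X/X₁, Q₂ : X → X/X₂ the quotient maps. If the restriction of Q₁ to X₂ is a λ-surjection onto its image Q₁(X₂) (i.e., the image of the open ball of radius λ in X₂ contains the open unit ball of Q₁(X₂)), then the restriction of Q₂ to X₁ is a (λ+1)-surjection onto its image Q₂(X₁). -/
/-!
Write `y = Q₂ x₁` with `x₁ ∈ X₁` and lift `y` to some `m` with `‖m‖ < 1`. Then `z = x₁ - m ∈ X₂`,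
and `Q₁ z = Q₁ (-m)` has norm `< 1`, so `Q₁ z = Q₁ w` for some `w ∈ X₂` with `‖w‖ < λ`. The element
`m + w = x₁ - (z - w)` lies in `X₁`, has norm `< 1 + λ`, and `Q₂ (m + w) = Q₂ m = y`.
-/

namespace Submodule

variable {R M : Type*} [Ring R] [SeminormedAddCommGroup M] [Module R M] {S : Submodule R M}

theorem exists_mkQ_eq_of_norm_lt {x : M ⧸ S} {r : ℝ} (hx : ‖x‖ < r) :
    ∃ m : M, S.mkQ m = x ∧ ‖m‖ < r :=
  QuotientAddGroup.norm_lt_iff.1 hx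

end Submodule

theorem quotient_lambda_surjection_general
    {𝕜 X : Type*} [RCLike 𝕜] [NormedAddCommGroup X] [NormedSpace 𝕜 X]
    (X₁ X₂ : Submodule 𝕜 X)
    (lam : ℝ)
    (hsurj : ∀ y : X ⧸ X₁, y ∈ X₂.map X₁.mkQ → ‖y‖ < 1 →
      ∃ x ∈ X₂, ‖x‖ < lam ∧ X₁.mkQ x = y) :
    ∀ y : X ⧸ X₂, y ∈ X₁.map X₂.mkQ → ‖y‖ < 1 →
      ∃ x ∈ X₁, ‖x‖ < lam + 1 ∧ X₂.mkQ x = y := by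
  rintro _ ⟨x₁, hx₁, rfl⟩ hy
  obtain ⟨m, hm, hm_lt⟩ := Submodule.exists_mkQ_eq_of_norm_lt hy
  have hz : x₁ - m ∈ X₂ := (Submodule.Quotient.eq X₂).1 hm.symm
  have hQz : X₁.mkQ (x₁ - m) = X₁.mkQ (-m) :=
    (Submodule.Quotient.eq X₁).2 (by simpa using hx₁)
  have hQz_lt : ‖X₁.mkQ (x₁ - m)‖ < 1 := by
    rw [hQz]
    exact (Submodule.Quotient.norm_mk_le X₁ (-m)).trans_lt (by simpa using hm_lt)
  obtain ⟨w, hw, hw_lt, hQw⟩ := hsurj _ ⟨_, hz, rfl⟩ hQz_lt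
  refine ⟨m + w, ?_, ?_, ?_⟩
  · have hzw : x₁ - m - w ∈ X₁ := (Submodule.Quotient.eq X₁).1 hQw.symm
    convert X₁.sub_mem hx₁ hzw using 1
    abel
  · linarith [norm_add_le m w]
  · rw [map_add, hm, add_eq_left]
    exact (Submodule.Quotient.mk_eq_zero X₂).2 hw

/-- If the restriction of the quotient map `Q₁ : X → X/X₁` to `X₂` is a `λ`-surjection onto its
image `Q₁(X₂)` (the image of the open ball of radius `λ` of `X₂` contains the open unit ball of
`Q₁(X₂)`), then the restriction of `Q₂ : X → X/X₂` to `X₁` is a `(λ+1)`-surjection onto its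
image `Q₂(X₁)`. -/
theorem quotient_lambda_surjection
    {𝕜 X : Type*} [RCLike 𝕜] [NormedAddCommGroup X] [NormedSpace 𝕜 X] [CompleteSpace X]
    (X₁ X₂ : Submodule 𝕜 X) (h₁ : IsClosed (X₁ : Set X)) (h₂ : IsClosed (X₂ : Set X))
    (lam : ℝ) (hlam : 0 < lam)
    (hsurj : ∀ y : X ⧸ X₁, y ∈ X₂.map X₁.mkQ → ‖y‖ < 1 →
      ∃ x ∈ X₂, ‖x‖ < lam ∧ X₁.mkQ x = y) :
    ∀ y : X ⧸ X₂, y ∈ X₁.map X₂.mkQ → ‖y‖ < 1 →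
      ∃ x ∈ X₁, ‖x‖ < lam + 1 ∧ X₂.mkQ x = y :=
  quotient_lambda_surjection_general X₁ X₂ lam hsurj
end

section
/- Let 1 ≤ q < ∞ and let F ∈ L_q(𝕋, m). Define K_q(F) as the function on 𝕋 × ℕ_{≥1} given by K_q(F)(t, n) = n^{-1/q} F(t). Then K_q(F) belongs to the weak-L_q space L_{q,∞}(dm ⊗ dn) (dn the counting measure on ℕ_{≥1}) and ‖K_q(F)‖_{L_{q,∞}} = ‖F‖_{L_q}; explicitly, sup_{s>0} s^q · (m ⊗ dn){ (t,n) : n^{-1/q}|F(t)| > s } = ∫ |F|^q dm. -/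
noncomputable section

open MeasureTheory Real
open scoped ENNReal

instance : Fact (0 < 2 * π) := ⟨by positivity⟩

/-- The circle group, with normalized Haar measure `μT`. -/
abbrev Circ : Type := AddCircle (2 * π)

def μT : Measure Circ := AddCircle.haarAddCircle

/-- The map `K_q : F ↦ ((t, n) ↦ n^{-1/q}·F(t))`, with `n` ranging over the positive integers
(encoded by `n : ℕ` standing for `n + 1`). -/
def Kq (q : ℝ) (F : Circ → ℂ) : Circ × ℕ → ℂ :=
  fun p => (((p.2 : ℝ) + 1) ^ (-(1 / q)) : ℝ) * F p.1

instance : SFinite (Measure.count : Measure ℕ) := by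
  rw [Measure.count]; infer_instance

lemma slice_iff (q s a : ℝ) (hq : 0 < q) (hs : 0 < s) (ha : 0 ≤ a) (n : ℕ) :
    s < ((n : ℝ) + 1) ^ (-(1 / q)) * a ↔ (n : ℝ) < a ^ q / s ^ q - 1 := by
  have hn1 : (0 : ℝ) < (n : ℝ) + 1 := by positivity
  have hc : (0 : ℝ) < ((n : ℝ) + 1) ^ (1 / q) := Real.rpow_pos_of_pos hn1 _
  have hsq : (0 : ℝ) < s ^ q := Real.rpow_pos_of_pos hs _
  rw [Real.rpow_neg hn1.le, inv_mul_eq_div, lt_div_iff₀ hc, lt_sub_iff_add_lt,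
    lt_div_iff₀ hsq]
  rw [← Real.rpow_lt_rpow_iff (by positivity) ha hq]
  rw [Real.mul_rpow hs.le hc.le]
  constructor
  · intro h
    calc ((n : ℝ) + 1) * s ^ q = s ^ q * (((n : ℝ) + 1) ^ (1 / q)) ^ q := by
          rw [← Real.rpow_mul hn1.le, one_div_mul_cancel hq.ne', Real.rpow_one]; ring
      _ < a ^ q := h
  · intro h
    calc s ^ q * (((n : ℝ) + 1) ^ (1 / q)) ^ q = ((n : ℝ) + 1) * s ^ q := by
          rw [← Real.rpow_mul hn1.le, one_div_mul_cancel hq.ne', Real.rpow_one]; ring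
      _ < a ^ q := h

lemma norm_Kq (q : ℝ) (g : Circ → ℂ) (p : Circ × ℕ) :
    ‖Kq q g p‖ = ((p.2 : ℝ) + 1) ^ (-(1 / q)) * ‖g p.1‖ := by
  have h1 : (0 : ℝ) < (p.2 : ℝ) + 1 := by positivity
  rw [Kq, norm_mul, Complex.norm_real, Real.norm_eq_abs,
    abs_of_pos (Real.rpow_pos_of_pos h1 _)]

lemma key (q : ℝ) (hq : 0 < q) (g : Circ → ℂ) (hg : Measurable g) (s : ℝ) (hs : 0 < s) :
    ENNReal.ofReal (s ^ q) * (μT.prod Measure.count) {p : Circ × ℕ | s < ‖Kq q g p‖} =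
      ∫⁻ t, ENNReal.ofReal (s ^ q) * (⌈‖g t‖ ^ q / s ^ q - 1⌉₊ : ℝ≥0∞) ∂μT := by
  have hK : Measurable fun p : Circ × ℕ => ‖Kq q g p‖ := by
    unfold Kq
    exact (((measurable_from_nat (f := fun n : ℕ =>
      ((((n : ℝ) + 1) ^ (-(1 / q)) : ℝ) : ℂ))).comp measurable_snd).mul
      (hg.comp measurable_fst)).norm
  have hA : MeasurableSet {p : Circ × ℕ | s < ‖Kq q g p‖} :=
    measurableSet_lt measurable_const hK
  rw [Measure.prod_apply hA, ← lintegral_const_mul' _ _ ENNReal.ofReal_ne_top]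
  refine lintegral_congr fun t => ?_
  have hset : Prod.mk t ⁻¹' {p : Circ × ℕ | s < ‖Kq q g p‖} =
      ↑(Finset.range ⌈‖g t‖ ^ q / s ^ q - 1⌉₊) := by
    ext n
    simp only [Set.mem_preimage, Set.mem_setOf_eq, Finset.coe_range, Set.mem_Iio]
    rw [norm_Kq, slice_iff q s (‖g t‖) hq hs (norm_nonneg _), ← Nat.lt_ceil]
  rw [hset, Measure.count_apply_finset, Finset.card_range]

instance : IsProbabilityMeasure μT := by unfold μT; infer_instance

lemma ceil_le_ofReal (x : ℝ) (hx : 0 ≤ x) : ((⌈x - 1⌉₊ : ℕ) : ℝ≥0∞) ≤ ENNReal.ofReal x := by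
  rw [← ENNReal.ofReal_natCast]
  apply ENNReal.ofReal_le_ofReal
  rcases le_or_gt (x - 1) 0 with h | h
  · simpa [Nat.ceil_eq_zero.mpr h] using hx
  · have := Nat.ceil_lt_add_one h.le
    linarith

lemma ofReal_sub_one_le_ceil (x : ℝ) :
    ENNReal.ofReal (x - 1) ≤ ((⌈x - 1⌉₊ : ℕ) : ℝ≥0∞) := by
  rw [← ENNReal.ofReal_natCast]; exact ENNReal.ofReal_le_ofReal (Nat.le_ceil _)

lemma main1 (q : ℝ) (hq : 1 ≤ q) (g : Circ → ℂ) (hg : Measurable g) :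
    (⨆ (s : ℝ) (_ : 0 < s), ENNReal.ofReal (s ^ q) *
        (μT.prod Measure.count) {p : Circ × ℕ | s < ‖Kq q g p‖}) =
      ∫⁻ x, ENNReal.ofReal (‖g x‖ ^ q) ∂μT := by
  have hq0 : 0 < q := lt_of_lt_of_le one_pos hq
  apply le_antisymm
  · refine iSup₂_le fun s hs => ?_
    rw [key q hq0 g hg s hs]
    refine lintegral_mono fun t => ?_
    have hsq : (0 : ℝ) < s ^ q := Real.rpow_pos_of_pos hs _
    calc ENNReal.ofReal (s ^ q) * (⌈‖g t‖ ^ q / s ^ q - 1⌉₊ : ℝ≥0∞)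
        ≤ ENNReal.ofReal (s ^ q) * ENNReal.ofReal (‖g t‖ ^ q / s ^ q) := by
          gcongr
          exact ceil_le_ofReal _ (by positivity)
      _ = ENNReal.ofReal (‖g t‖ ^ q) := by
          rw [← ENNReal.ofReal_mul (by positivity)]
          congr 1
          field_simp
  · refine ENNReal.le_of_forall_pos_le_add fun ε hε _ => ?_
    set s : ℝ := (ε : ℝ) ^ (1 / q) with hsdef
    have hεpos : (0 : ℝ) < (ε : ℝ) := by exact_mod_cast hε
    have hs : 0 < s := Real.rpow_pos_of_pos hεpos _
    have hsq : s ^ q = (ε : ℝ) := by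
      rw [hsdef, ← Real.rpow_mul hεpos.le, one_div_mul_cancel hq0.ne', Real.rpow_one]
    have lower : (∫⁻ x, ENNReal.ofReal (‖g x‖ ^ q) ∂μT) - ENNReal.ofReal (s ^ q) ≤
        ENNReal.ofReal (s ^ q) *
          (μT.prod Measure.count) {p : Circ × ℕ | s < ‖Kq q g p‖} := by
      rw [key q hq0 g hg s hs]
      calc (∫⁻ x, ENNReal.ofReal (‖g x‖ ^ q) ∂μT) - ENNReal.ofReal (s ^ q)
          = (∫⁻ x, ENNReal.ofReal (‖g x‖ ^ q) ∂μT) -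
              ∫⁻ _x, ENNReal.ofReal (s ^ q) ∂μT := by
            rw [lintegral_const, measure_univ, mul_one]
        _ ≤ ∫⁻ t, ENNReal.ofReal (‖g t‖ ^ q) - ENNReal.ofReal (s ^ q) ∂μT :=
            lintegral_sub_le _ _ measurable_const
        _ ≤ ∫⁻ t, ENNReal.ofReal (s ^ q) * (⌈‖g t‖ ^ q / s ^ q - 1⌉₊ : ℝ≥0∞) ∂μT := by
            refine lintegral_mono fun t => ?_
            have hsq' : (0 : ℝ) < s ^ q := Real.rpow_pos_of_pos hs _
            rw [← ENNReal.ofReal_sub _ (by positivity)]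
            have heq : ‖g t‖ ^ q - s ^ q = s ^ q * (‖g t‖ ^ q / s ^ q - 1) := by
              field_simp
            rw [heq, ENNReal.ofReal_mul (by positivity)]
            exact mul_le_mul_right (ofReal_sub_one_le_ceil _) _
    calc (∫⁻ x, ENNReal.ofReal (‖g x‖ ^ q) ∂μT)
        ≤ ENNReal.ofReal (s ^ q) *
            (μT.prod Measure.count) {p : Circ × ℕ | s < ‖Kq q g p‖} +
            ENNReal.ofReal (s ^ q) := tsub_le_iff_right.mp lower
      _ ≤ (⨆ (s : ℝ) (_ : 0 < s), ENNReal.ofReal (s ^ q) *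
            (μT.prod Measure.count) {p : Circ × ℕ | s < ‖Kq q g p‖}) + ↑ε := by
          gcongr
          · exact le_iSup₂ (f := fun (s : ℝ) (_ : 0 < s) => ENNReal.ofReal (s ^ q) *
              (μT.prod Measure.count) {p : Circ × ℕ | s < ‖Kq q g p‖}) s hs
          · rw [hsq, ENNReal.ofReal_coe_nnreal]

/-- Let `1 ≤ q < ∞` and `F ∈ L_q(𝕋, m)`.  Then `K_q(F)(t, n) = n^{-1/q}·F(t)` belongs to weak
`L_q` of `m ⊗ (counting measure)` with `‖K_q F‖_{L_{q,∞}} = ‖F‖_{L_q}`; explicitly,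
`sup_{s>0} s^q · (m ⊗ dn){(t,n) : n^{-1/q}|F(t)| > s} = ∫|F|^q dm`. -/
theorem Kq_weak_Lq_norm (q : ℝ) (hq : 1 ≤ q) (F : Circ → ℂ)
    (hF : MemLp F (ENNReal.ofReal q) μT) :
    (⨆ (s : ℝ) (_ : 0 < s), ENNReal.ofReal (s ^ q) *
        (μT.prod Measure.count) {p : Circ × ℕ | s < ‖Kq q F p‖}) =
      ∫⁻ x, ENNReal.ofReal (‖F x‖ ^ q) ∂μT ∧
    (⨆ (s : ℝ) (_ : 0 < s), ENNReal.ofReal s *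
        ((μT.prod Measure.count) {p : Circ × ℕ | s < ‖Kq q F p‖}) ^ (1 / q)) =
      (∫⁻ x, ENNReal.ofReal (‖F x‖ ^ q) ∂μT) ^ (1 / q) := by
  have hq0 : 0 < q := lt_of_lt_of_le one_pos hq
  obtain ⟨hmeas, -⟩ := hF
  set g : Circ → ℂ := hmeas.mk F with hgdef
  have hg : Measurable g := hmeas.stronglyMeasurable_mk.measurable
  have hFg : F =ᵐ[μT] g := hmeas.ae_eq_mk
  have hN : μT {x | F x ≠ g x} = 0 := hFg
  have hsets : ∀ s : ℝ, (μT.prod Measure.count) {p : Circ × ℕ | s < ‖Kq q F p‖} =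
      (μT.prod Measure.count) {p : Circ × ℕ | s < ‖Kq q g p‖} := by
    intro s
    have hnull : (μT.prod Measure.count) ({x | F x ≠ g x} ×ˢ (Set.univ : Set ℕ)) = 0 := by
      rw [Measure.prod_prod, hN, zero_mul]
    have hsub1 : {p : Circ × ℕ | s < ‖Kq q F p‖} \ {p : Circ × ℕ | s < ‖Kq q g p‖} ⊆
        {x | F x ≠ g x} ×ˢ (Set.univ : Set ℕ) := by
      rintro ⟨t, n⟩ ⟨h1, h2⟩
      refine ⟨fun hFgt => h2 ?_, trivial⟩
      simpa only [Set.mem_setOf_eq, Kq, hFgt] using h1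
    have hsub2 : {p : Circ × ℕ | s < ‖Kq q g p‖} \ {p : Circ × ℕ | s < ‖Kq q F p‖} ⊆
        {x | F x ≠ g x} ×ˢ (Set.univ : Set ℕ) := by
      rintro ⟨t, n⟩ ⟨h1, h2⟩
      refine ⟨fun hFgt => h2 ?_, trivial⟩
      simpa only [Set.mem_setOf_eq, Kq, hFgt] using h1
    exact measure_congr (MeasureTheory.ae_eq_set.mpr
      ⟨measure_mono_null hsub1 hnull, measure_mono_null hsub2 hnull⟩)
  have hI : (∫⁻ x, ENNReal.ofReal (‖F x‖ ^ q) ∂μT) =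
      ∫⁻ x, ENNReal.ofReal (‖g x‖ ^ q) ∂μT :=
    lintegral_congr_ae (hFg.mono fun x hx => by dsimp only; rw [hx])
  have part1 : (⨆ (s : ℝ) (_ : 0 < s), ENNReal.ofReal (s ^ q) *
      (μT.prod Measure.count) {p : Circ × ℕ | s < ‖Kq q F p‖}) =
      ∫⁻ x, ENNReal.ofReal (‖F x‖ ^ q) ∂μT := by
    rw [hI]
    simp_rw [hsets]
    exact main1 q hq g hg
  refine ⟨part1, ?_⟩
  have hterm : ∀ s : ℝ, 0 < s → ENNReal.ofReal s *
      ((μT.prod Measure.count) {p : Circ × ℕ | s < ‖Kq q F p‖}) ^ (1 / q) =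
      (ENNReal.ofReal (s ^ q) *
        (μT.prod Measure.count) {p : Circ × ℕ | s < ‖Kq q F p‖}) ^ (1 / q) := by
    intro s hs
    rw [ENNReal.mul_rpow_of_nonneg _ _ (by positivity)]
    congr 1
    rw [ENNReal.ofReal_rpow_of_nonneg (by positivity) (by positivity),
      ← Real.rpow_mul hs.le, mul_one_div_cancel hq0.ne', Real.rpow_one]
  apply le_antisymm
  · refine iSup₂_le fun s hs => ?_
    rw [hterm s hs]
    refine ENNReal.rpow_le_rpow ?_ (by positivity)
    rw [← part1]
    exact le_iSup₂ (f := fun (s : ℝ) (_ : 0 < s) => ENNReal.ofReal (s ^ q) *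
      (μT.prod Measure.count) {p : Circ × ℕ | s < ‖Kq q F p‖}) s hs
  · have h2 : (∫⁻ x, ENNReal.ofReal (‖F x‖ ^ q) ∂μT) ≤
        (⨆ (s : ℝ) (_ : 0 < s), ENNReal.ofReal s *
          ((μT.prod Measure.count) {p : Circ × ℕ | s < ‖Kq q F p‖}) ^ (1 / q)) ^ q := by
      rw [← part1]
      refine iSup₂_le fun s hs => ?_
      have h3 : ENNReal.ofReal (s ^ q) *
          (μT.prod Measure.count) {p : Circ × ℕ | s < ‖Kq q F p‖} =
          (ENNReal.ofReal s *
            ((μT.prod Measure.count) {p : Circ × ℕ | s < ‖Kq q F p‖}) ^ (1 / q)) ^ q := by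
        rw [hterm s hs, ← ENNReal.rpow_mul, one_div_mul_cancel hq0.ne', ENNReal.rpow_one]
      rw [h3]
      refine ENNReal.rpow_le_rpow ?_ hq0.le
      exact le_iSup₂ (f := fun (s : ℝ) (_ : 0 < s) => ENNReal.ofReal s *
        ((μT.prod Measure.count) {p : Circ × ℕ | s < ‖Kq q F p‖}) ^ (1 / q)) s hs
    calc (∫⁻ x, ENNReal.ofReal (‖F x‖ ^ q) ∂μT) ^ (1 / q)
        ≤ ((⨆ (s : ℝ) (_ : 0 < s), ENNReal.ofReal s *
            ((μT.prod Measure.count) {p : Circ × ℕ | s < ‖Kq q F p‖}) ^ (1 / q)) ^ q) ^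
              (1 / q) := ENNReal.rpow_le_rpow h2 (by positivity)
      _ = _ := by
          rw [← ENNReal.rpow_mul, mul_one_div_cancel hq0.ne', ENNReal.rpow_one]
end
end

section
/- If f is analytic on the unit disc with boundary values in L¹ + L^q and f = B·F² is its factorization with B a Blaschke product (‖B‖_∞ ≤ 1) and F nonvanishing analytic with |F| = |f|^{1/2} a.e. on the circle, then for all t > 0: K_{t^{1/2}}(F, L², L^{2q}) ≤ (2·K_t(f, L¹, L^q))^{1/2}. -/
noncomputable section

open MeasureTheory Real Set
open scoped ENNReal

/-- `f` belongs to the Hardy space `H^p` of the circle. -/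
def HardyMem (p : ℝ≥0∞) (f : Circ → ℂ) : Prop :=
  MemLp f p μT ∧ ∀ n : ℤ, n < 0 → fourierCoeff f n = 0

/-- The K-functional of the couple `(L^{p₀}, L^{p₁})` on the circle. -/
def KL (t : ℝ) (p₀ p₁ : ℝ≥0∞) (f : Circ → ℂ) : ℝ≥0∞ :=
  sInf {c : ℝ≥0∞ | ∃ f₀ f₁ : Circ → ℂ, f = f₀ + f₁ ∧ MemLp f₀ p₀ μT ∧ MemLp f₁ p₁ μT ∧
    c = eLpNorm f₀ p₀ μT + ENNReal.ofReal t * eLpNorm f₁ p₁ μT}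

/-- `√2`-subadditivity of the square root on `ℝ≥0∞`:
`u^{1/2} + v^{1/2} ≤ (2(u+v))^{1/2}`. -/
lemma ennreal_sqrt_add_le (u v : ℝ≥0∞) :
    u ^ ((1 : ℝ) / 2) + v ^ ((1 : ℝ) / 2) ≤ (2 * (u + v)) ^ ((1 : ℝ) / 2) := by
  have hs : (u ^ ((1:ℝ)/2) + v ^ ((1:ℝ)/2)) ^ (2:ℝ) ≤ 2 * (u + v) := by
    calc (u ^ ((1:ℝ)/2) + v ^ ((1:ℝ)/2)) ^ (2:ℝ)
        ≤ (2:ℝ≥0∞) ^ ((2:ℝ) - 1) * ((u ^ ((1:ℝ)/2)) ^ (2:ℝ) + (v ^ ((1:ℝ)/2)) ^ (2:ℝ)) :=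
          ENNReal.rpow_add_le_mul_rpow_add_rpow _ _ one_le_two
      _ = 2 * (u + v) := by
          rw [← ENNReal.rpow_mul, ← ENNReal.rpow_mul,
            show ((1:ℝ)/2) * 2 = 1 by norm_num, show (2:ℝ) - 1 = 1 by norm_num,
            ENNReal.rpow_one, ENNReal.rpow_one, ENNReal.rpow_one]
  have h2 := ENNReal.rpow_le_rpow hs (by norm_num : (0:ℝ) ≤ 1 / 2)
  rwa [← ENNReal.rpow_mul, show (2:ℝ) * (1 / 2) = 1 by norm_num, ENNReal.rpow_one] at h2

/-- Real subadditivity of `x ↦ x^{1/2}` on nonnegative reals. -/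
lemma real_rpow_half_add {c d : ℝ} (hc : 0 ≤ c) (hd : 0 ≤ d) :
    (c + d) ^ ((1 : ℝ) / 2) ≤ c ^ ((1 : ℝ) / 2) + d ^ ((1 : ℝ) / 2) := by
  have h := NNReal.rpow_add_le_add_rpow c.toNNReal d.toNNReal
    (by norm_num : (0:ℝ) ≤ 1 / 2) (by norm_num : (1:ℝ) / 2 ≤ 1)
  have h' := NNReal.coe_le_coe.2 h
  simpa [← Real.toNNReal_add hc hd, NNReal.coe_rpow, Real.coe_toNNReal _ hc,
    Real.coe_toNNReal _ hd, Real.coe_toNNReal _ (add_nonneg hc hd)] using h'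

lemma half_exponents (q : ℝ≥0∞) : 2 * ENNReal.ofReal ((1:ℝ)/2) = 1 ∧
    2 * q * ENNReal.ofReal ((1:ℝ)/2) = q := by
  have h12 : ENNReal.ofReal ((1:ℝ)/2) = (2 : ℝ≥0∞)⁻¹ := by
    rw [one_div, ENNReal.ofReal_inv_of_pos (by norm_num)]
    norm_num
  constructor
  · rw [h12, ENNReal.mul_inv_cancel (by norm_num) (by norm_num)]
  · rw [h12, mul_right_comm, ENNReal.mul_inv_cancel (by norm_num) (by norm_num), one_mul]

/-- The key decomposition step: from a decomposition `f₀ + f₁` dominating `F` pointwise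
via `‖F‖ ≤ ‖f₀ + f₁‖^{1/2}`, produce a decomposition of `F` in `L² + L^{2q}`. -/
lemma key_decomp (q : ℝ≥0∞) (F : Circ → ℂ) (hFm : AEStronglyMeasurable F μT)
    (f₀ f₁ : Circ → ℂ) (h0 : MemLp f₀ 1 μT) (h1 : MemLp f₁ q μT)
    (habs : ∀ᵐ x ∂μT, ‖F x‖ ≤ ‖f₀ x + f₁ x‖ ^ ((1 : ℝ) / 2))
    (t : ℝ) (ht : 0 < t) :
    KL (Real.sqrt t) 2 (2 * q) F ≤
      (2 * (eLpNorm f₀ 1 μT + ENNReal.ofReal t * eLpNorm f₁ q μT)) ^ ((1 : ℝ) / 2) := by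
  set a : Circ → ℝ := fun x => ‖f₀ x‖ ^ ((1 : ℝ) / 2) with ha_def
  set b : Circ → ℝ := fun x => ‖f₁ x‖ ^ ((1 : ℝ) / 2) with hb_def
  set r : Circ → ℝ := fun x => a x / (a x + b x) with hr_def
  set F₀ : Circ → ℂ := fun x => (r x : ℂ) * F x with hF₀_def
  set F₁ : Circ → ℂ := fun x => ((1 - r x : ℝ) : ℂ) * F x with hF₁_def
  have ha_nonneg : ∀ x, 0 ≤ a x := fun x => Real.rpow_nonneg (norm_nonneg _) _
  have hb_nonneg : ∀ x, 0 ≤ b x := fun x => Real.rpow_nonneg (norm_nonneg _) _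
  have hr0 : ∀ x, 0 ≤ r x := fun x =>
    div_nonneg (ha_nonneg x) (add_nonneg (ha_nonneg x) (hb_nonneg x))
  have hr1 : ∀ x, r x ≤ 1 := fun x =>
    div_le_one_of_le₀ (le_add_of_nonneg_right (hb_nonneg x))
      (add_nonneg (ha_nonneg x) (hb_nonneg x))
  -- decomposition of F
  have hsum : F = F₀ + F₁ := by
    funext x
    simp only [hF₀_def, hF₁_def, Pi.add_apply]
    push_cast
    ring
  -- pointwise bounds
  have hboundF₀ : ∀ᵐ x ∂μT, ‖F₀ x‖ ≤ ‖a x‖ := by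
    filter_upwards [habs] with x hx
    have hFle : ‖F x‖ ≤ a x + b x := by
      calc ‖F x‖ ≤ ‖f₀ x + f₁ x‖ ^ ((1:ℝ)/2) := hx
        _ ≤ (‖f₀ x‖ + ‖f₁ x‖) ^ ((1:ℝ)/2) :=
            Real.rpow_le_rpow (norm_nonneg _) (norm_add_le _ _) (by norm_num)
        _ ≤ a x + b x := real_rpow_half_add (norm_nonneg _) (norm_nonneg _)
    have : ‖F₀ x‖ = r x * ‖F x‖ := by
      rw [hF₀_def]
      simp only [norm_mul, Complex.norm_real, Real.norm_eq_abs, abs_of_nonneg (hr0 x)]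
    rw [this, Real.norm_eq_abs, abs_of_nonneg (ha_nonneg x)]
    by_cases hab : a x + b x = 0
    · have hr : r x = 0 := by simp [hr_def, hab]
      simp [hr, ha_nonneg x]
    · calc r x * ‖F x‖ ≤ r x * (a x + b x) := by
            exact mul_le_mul_of_nonneg_left hFle (hr0 x)
        _ = a x := by rw [hr_def]; field_simp
  have hboundF₁ : ∀ᵐ x ∂μT, ‖F₁ x‖ ≤ ‖b x‖ := by
    filter_upwards [habs] with x hx
    have hFle : ‖F x‖ ≤ a x + b x := by
      calc ‖F x‖ ≤ ‖f₀ x + f₁ x‖ ^ ((1:ℝ)/2) := hx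
        _ ≤ (‖f₀ x‖ + ‖f₁ x‖) ^ ((1:ℝ)/2) :=
            Real.rpow_le_rpow (norm_nonneg _) (norm_add_le _ _) (by norm_num)
        _ ≤ a x + b x := real_rpow_half_add (norm_nonneg _) (norm_nonneg _)
    have h1r : (0:ℝ) ≤ 1 - r x := by linarith [hr1 x]
    have : ‖F₁ x‖ = (1 - r x) * ‖F x‖ := by
      rw [hF₁_def]
      simp only [norm_mul, Complex.norm_real, Real.norm_eq_abs, abs_of_nonneg h1r]
    rw [this, Real.norm_eq_abs, abs_of_nonneg (hb_nonneg x)]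
    by_cases hab : a x + b x = 0
    · have hF0 : ‖F x‖ = 0 :=
        le_antisymm (by rw [hab] at hFle; exact hFle) (norm_nonneg _)
      rw [hF0, mul_zero]
      exact hb_nonneg x
    · calc (1 - r x) * ‖F x‖ ≤ (1 - r x) * (a x + b x) :=
            mul_le_mul_of_nonneg_left hFle h1r
        _ = b x := by rw [hr_def]; field_simp; ring
  -- eLpNorm computations for the majorants
  obtain ⟨he2, he2q⟩ := half_exponents q
  have heA : eLpNorm a 2 μT = eLpNorm f₀ 1 μT ^ ((1:ℝ)/2) := by
    rw [ha_def]
    rw [eLpNorm_norm_rpow f₀ (by norm_num : (0:ℝ) < 1/2), he2]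
  have heB : eLpNorm b (2 * q) μT = eLpNorm f₁ q μT ^ ((1:ℝ)/2) := by
    rw [hb_def]
    rw [eLpNorm_norm_rpow f₁ (by norm_num : (0:ℝ) < 1/2), he2q]
  -- measurability
  have hrpow_cont : Continuous fun y : ℝ => y ^ ((1:ℝ)/2) :=
    Real.continuous_rpow_const (by norm_num)
  have ha_meas : AEMeasurable a μT :=
    hrpow_cont.measurable.comp_aemeasurable (h0.aestronglyMeasurable.norm.aemeasurable)
  have hb_meas : AEMeasurable b μT :=
    hrpow_cont.measurable.comp_aemeasurable (h1.aestronglyMeasurable.norm.aemeasurable)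
  have hr_meas : AEMeasurable r μT := ha_meas.div (ha_meas.add hb_meas)
  have hF₀m : AEStronglyMeasurable F₀ μT :=
    ((Complex.measurable_ofReal.comp_aemeasurable hr_meas).aestronglyMeasurable).mul hFm
  have hF₁m : AEStronglyMeasurable F₁ μT :=
    ((Complex.measurable_ofReal.comp_aemeasurable
      ((aemeasurable_const (b := (1:ℝ))).sub hr_meas)).aestronglyMeasurable).mul hFm
  -- membership
  have hle0 : eLpNorm F₀ 2 μT ≤ eLpNorm f₀ 1 μT ^ ((1:ℝ)/2) := by
    rw [← heA]; exact eLpNorm_mono_ae hboundF₀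
  have hle1 : eLpNorm F₁ (2 * q) μT ≤ eLpNorm f₁ q μT ^ ((1:ℝ)/2) := by
    rw [← heB]; exact eLpNorm_mono_ae hboundF₁
  have hmem0 : MemLp F₀ 2 μT :=
    ⟨hF₀m, lt_of_le_of_lt hle0 (ENNReal.rpow_lt_top_of_nonneg (by norm_num) h0.2.ne)⟩
  have hmem1 : MemLp F₁ (2 * q) μT :=
    ⟨hF₁m, lt_of_le_of_lt hle1 (ENNReal.rpow_lt_top_of_nonneg (by norm_num) h1.2.ne)⟩
  -- the K-functional bound
  have hKle : KL (Real.sqrt t) 2 (2 * q) F ≤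
      eLpNorm F₀ 2 μT + ENNReal.ofReal (Real.sqrt t) * eLpNorm F₁ (2 * q) μT :=
    sInf_le ⟨F₀, F₁, hsum, hmem0, hmem1, rfl⟩
  have hsqrt : ENNReal.ofReal (Real.sqrt t) = ENNReal.ofReal t ^ ((1:ℝ)/2) := by
    rw [Real.sqrt_eq_rpow, ENNReal.ofReal_rpow_of_pos ht]
  calc KL (Real.sqrt t) 2 (2 * q) F
      ≤ eLpNorm F₀ 2 μT + ENNReal.ofReal (Real.sqrt t) * eLpNorm F₁ (2 * q) μT := hKle
    _ ≤ eLpNorm f₀ 1 μT ^ ((1:ℝ)/2) +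
        ENNReal.ofReal t ^ ((1:ℝ)/2) * eLpNorm f₁ q μT ^ ((1:ℝ)/2) := by
        rw [hsqrt]
        exact add_le_add hle0 (mul_le_mul_right hle1 _)
    _ = eLpNorm f₀ 1 μT ^ ((1:ℝ)/2) +
        (ENNReal.ofReal t * eLpNorm f₁ q μT) ^ ((1:ℝ)/2) := by
        rw [ENNReal.mul_rpow_of_nonneg _ _ (by norm_num : (0:ℝ) ≤ 1/2)]
    _ ≤ (2 * (eLpNorm f₀ 1 μT + ENNReal.ofReal t * eLpNorm f₁ q μT)) ^ ((1:ℝ)/2) :=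
        ennreal_sqrt_add_le _ _

/-- Let `f ∈ H¹ + H^q` (boundary values on the circle) and let `f = B·F²` be its factorization
with `B` a Blaschke product (`B ∈ H^∞`, `‖B‖_∞ ≤ 1`) and `F` a nonvanishing analytic function
with `|F| = |f|^{1/2}` a.e. on the circle.  Then for all `t > 0`,
`K_{t^{1/2}}(F, L², L^{2q}) ≤ (2·K_t(f, L¹, L^q))^{1/2}`. -/
theorem K_sqrt_outer_bound (q : ℝ≥0∞) (hq : 1 < q) (f F : Circ → ℂ)
    (hf : ∃ f₀ f₁ : Circ → ℂ, f = f₀ + f₁ ∧ HardyMem 1 f₀ ∧ HardyMem q f₁)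
    (hBlaschke : ∃ B : Circ → ℂ, HardyMem ∞ B ∧ eLpNorm B ∞ μT ≤ 1 ∧
      ∀ᵐ x ∂μT, f x = B x * (F x) ^ 2)
    (hFanalytic : ∃ F₀ F₁ : Circ → ℂ, F = F₀ + F₁ ∧ HardyMem 2 F₀ ∧ HardyMem (2 * q) F₁)
    (hFnonvanishing : ∀ᵐ x ∂μT, F x ≠ 0)
    (hFabs : ∀ᵐ x ∂μT, ‖F x‖ = ‖f x‖ ^ ((1 : ℝ) / 2)) :
    ∀ t : ℝ, 0 < t →
      KL (Real.sqrt t) 2 (2 * q) F ≤ (2 * KL t 1 q f) ^ ((1 : ℝ) / 2) := by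
  intro t ht
  obtain ⟨G₀, G₁, hFG, hG₀, hG₁⟩ := hFanalytic
  have hFm : AEStronglyMeasurable F μT := by
    rw [hFG]; exact hG₀.1.aestronglyMeasurable.add hG₁.1.aestronglyMeasurable
  -- for every element c of the decomposition set of f, KL_F ≤ (2c)^{1/2}
  have hmain : ∀ c ∈ {c : ℝ≥0∞ | ∃ f₀ f₁ : Circ → ℂ, f = f₀ + f₁ ∧ MemLp f₀ 1 μT ∧
      MemLp f₁ q μT ∧ c = eLpNorm f₀ 1 μT + ENNReal.ofReal t * eLpNorm f₁ q μT},
      KL (Real.sqrt t) 2 (2 * q) F ≤ (2 * c) ^ ((1:ℝ)/2) := by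
    rintro c ⟨f₀, f₁, hff, h0, h1, rfl⟩
    have habs : ∀ᵐ x ∂μT, ‖F x‖ ≤ ‖f₀ x + f₁ x‖ ^ ((1 : ℝ) / 2) := by
      filter_upwards [hFabs] with x hx
      rw [hx, hff]; rfl
    exact key_decomp q F hFm f₀ f₁ h0 h1 habs t ht
  -- conclude via an ε-argument
  set A := KL t 1 q f with hA
  by_cases hAtop : A = ⊤
  · rw [hAtop]
    simp [ENNReal.top_rpow_of_pos (by norm_num : (0:ℝ) < 1/2)]
  refine ENNReal.le_of_forall_pos_le_add fun ε hε _ => ?_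
  set δ : ℝ≥0∞ := ((ε : ℝ≥0∞) * ε) / 2 with hδ
  have hδ0 : δ ≠ 0 := by
    simp [hδ, ENNReal.div_eq_zero_iff, hε.ne']
  have hAlt : A < A + δ := ENNReal.lt_add_right hAtop hδ0
  have : sInf {c : ℝ≥0∞ | ∃ f₀ f₁ : Circ → ℂ, f = f₀ + f₁ ∧ MemLp f₀ 1 μT ∧
      MemLp f₁ q μT ∧ c = eLpNorm f₀ 1 μT + ENNReal.ofReal t * eLpNorm f₁ q μT} < A + δ := hAlt
  obtain ⟨c, hcS, hclt⟩ := sInf_lt_iff.mp this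
  have h2δ : 2 * δ = (ε : ℝ≥0∞) * ε := by
    rw [hδ, ENNReal.mul_div_cancel' (by norm_num) (by norm_num)]
  have hδsqrt : (2 * δ) ^ ((1:ℝ)/2) = (ε : ℝ≥0∞) := by
    rw [h2δ, ← sq, ← ENNReal.rpow_natCast _ 2, ← ENNReal.rpow_mul]
    norm_num
  calc KL (Real.sqrt t) 2 (2 * q) F ≤ (2 * c) ^ ((1:ℝ)/2) := hmain c hcS
    _ ≤ (2 * (A + δ)) ^ ((1:ℝ)/2) := by
        apply ENNReal.rpow_le_rpow _ (by norm_num)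
        exact mul_le_mul_right hclt.le 2
    _ = (2 * A + 2 * δ) ^ ((1:ℝ)/2) := by rw [mul_add]
    _ ≤ (2 * A) ^ ((1:ℝ)/2) + (2 * δ) ^ ((1:ℝ)/2) :=
        ENNReal.rpow_add_le_add_rpow _ _ (by norm_num) (by norm_num)
    _ = (2 * A) ^ ((1:ℝ)/2) + ε := by rw [hδsqrt]
end
end
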